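/- Let q ∈ ℂ with |q| < 1 and define ϑ₁(z) = 2 Σ_{n=0}^∞ (−1)ⁿ q^{(n+1/2)²} sin((2n+1)z) and ϑ₄(z) = 1 + 2 Σ_{n=1}^∞ (−1)ⁿ q^{n²} cos(2nz). Then for all u, v, a ∈ ℂ: ϑ₁(v)ϑ₁(a−v)ϑ₄(u)ϑ₄(a−u) − ϑ₄(v)ϑ₄(a−v)ϑ₁(u)ϑ₁(a−u) = ϑ₄(0)·ϑ₄(a)·ϑ₁(v−u)·ϑ₁(a−u−v). -/

import Mathlib

open Complex

/-- The Jacobi theta function `ϑ₁(z) = 2 Σ_{n≥0} (−1)ⁿ q^{(n+1/2)²} sin((2n+1)z)`. -/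
noncomputable def thetaJ₁ (q z : ℂ) : ℂ :=
  2 * ∑' n : ℕ, (-1 : ℂ) ^ n * q ^ (((n : ℂ) + 1/2) ^ 2) * Complex.sin ((2 * (n : ℂ) + 1) * z)

/-- The Jacobi theta function `ϑ₄(z) = 1 + 2 Σ_{n≥1} (−1)ⁿ q^{n²} cos(2nz)`. -/
noncomputable def thetaJ₄ (q z : ℂ) : ℂ :=
  1 + 2 * ∑' n : ℕ, (-1 : ℂ) ^ (n + 1) * q ^ (((n : ℂ) + 1) ^ 2) *
    Complex.cos (2 * ((n : ℂ) + 1) * z)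

open Real

noncomputable def Sf (a b : ℂ) : ℂ := ∑' n : ℤ, Complex.exp (a * n^2 + b * n)

lemma summable_Sf {a : ℂ} (ha : a.re < 0) (b : ℂ) :
    Summable (fun n : ℤ => Complex.exp (a * n^2 + b * n)) := by
  have hπ : (π : ℂ) ≠ 0 := by exact_mod_cast Real.pi_ne_zero
  have him : 0 < (a / (π * I)).im := by
    rw [show a / ((π:ℂ) * I) = (-(a * I)) / (π:ℂ) by field_simp; linear_combination a * Complex.I_sq]
    rw [div_ofReal_im]
    simp only [neg_im, mul_I_im]
    exact div_pos (by linarith) Real.pi_pos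
  have h := (summable_jacobiTheta₂_term_iff (b / (2 * π * I)) (a / (π * I))).mpr him
  refine h.congr fun n => ?_
  rw [jacobiTheta₂_term]
  congr 1
  field_simp
  ring

lemma summable_Sf_norm {a : ℂ} (ha : a.re < 0) (b : ℂ) :
    Summable (fun n : ℤ => ‖Complex.exp (a * n^2 + b * n)‖) := by
  have key : ∀ n : ℤ, ‖Complex.exp (a * n^2 + b * n)‖
      = Real.exp (a.re * (n:ℝ)^2 + b.re * n) := by
    intro n
    rw [Complex.norm_exp]
    congr 1
    rw [show ((n:ℂ)^2) = (((n^2 : ℤ) : ℝ) : ℂ) from by push_cast; ring,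
      show ((n:ℂ)) = (((n : ℤ) : ℝ) : ℂ) from by push_cast; ring]
    simp only [Complex.add_re, Complex.mul_re, Complex.ofReal_re, Complex.ofReal_im,
      mul_zero, sub_zero]
    push_cast
    ring
  simp_rw [key]
  rw [← Complex.summable_ofReal]
  refine (summable_Sf (a := (a.re : ℂ)) (by simpa using ha) ((b.re : ℂ))).congr fun n => ?_
  rw [Complex.ofReal_exp]
  norm_cast

lemma Sf_period {a : ℂ} (b : ℂ) : Sf a (b + 2 * π * I) = Sf a b := by
  refine tsum_congr fun n => ?_
  rw [show a * n^2 + (b + 2*π*I) * n = (a * n^2 + b * n) + n * (2*π*I) by ring,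
    Complex.exp_add, Complex.exp_int_mul_two_pi_mul_I, mul_one]

lemma Sf_neg (a b : ℂ) : Sf a (-b) = Sf a b := by
  rw [Sf, ← (Equiv.neg ℤ).tsum_eq]
  refine tsum_congr fun n => ?_
  simp only [Equiv.neg_apply]
  congr 1
  push_cast
  ring

lemma Sf_shift (a b : ℂ) : Sf a (2 * a + b) = Complex.exp (-(a + b)) * Sf a b := by
  rw [Sf, Sf, ← (Equiv.addRight (1 : ℤ)).tsum_eq (fun n : ℤ => Complex.exp (a * n^2 + b * n)), ← tsum_mul_left]
  refine tsum_congr fun n => ?_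
  simp only [Equiv.coe_addRight]
  rw [← Complex.exp_add]
  congr 1
  push_cast
  ring

def evenPairs : Set (ℤ × ℤ) := {p | (p.1 + p.2) % 2 = 0}

def eEven : (ℤ × ℤ) ≃ evenPairs where
  toFun p := ⟨(p.1 + p.2, p.1 - p.2), by simp [evenPairs]; omega⟩
  invFun p := ((p.1.1 + p.1.2) / 2, (p.1.1 - p.1.2) / 2)
  left_inv p := by
    obtain ⟨m, n⟩ := p
    simp only
    rw [Prod.ext_iff]; constructor <;> simp <;> omega
  right_inv p := by
    obtain ⟨⟨m, n⟩, h⟩ := p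
    simp only [evenPairs, Set.mem_setOf_eq] at h
    apply Subtype.ext
    simp only
    rw [Prod.ext_iff]; constructor <;> simp <;> omega

def eOdd : (ℤ × ℤ) ≃ (evenPairsᶜ : Set (ℤ × ℤ)) where
  toFun p := ⟨(p.1 + p.2 + 1, p.1 - p.2), by simp [evenPairs]; omega⟩
  invFun p := ((p.1.1 + p.1.2 - 1) / 2, (p.1.1 - p.1.2 - 1) / 2)
  left_inv p := by
    obtain ⟨m, n⟩ := p
    simp only
    rw [Prod.ext_iff]; constructor <;> simp <;> omega
  right_inv p := by
    obtain ⟨⟨m, n⟩, h⟩ := p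
    simp only [evenPairs, Set.mem_compl_iff, Set.mem_setOf_eq] at h
    apply Subtype.ext
    simp only
    rw [Prod.ext_iff]; constructor <;> simp <;> omega

set_option maxHeartbeats 1600000 in
lemma prod_Sf {a : ℂ} (ha : a.re < 0) (b c : ℂ) :
    Sf a b * Sf a c = Sf (2*a) (b+c) * Sf (2*a) (b-c)
      + Complex.exp (a+b) * (Sf (2*a) (2*a+b+c) * Sf (2*a) (2*a+b-c)) := by
  have h2a : (2*a).re < 0 := by
    rw [show (2:ℂ)*a = a + a by ring, Complex.add_re]; linarith
  have hb := summable_Sf_norm ha b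
  have hc := summable_Sf_norm ha c
  have hH : Summable (fun p : ℤ × ℤ =>
      Complex.exp (a*p.1^2 + b*p.1) * Complex.exp (a*p.2^2 + c*p.2)) :=
    summable_mul_of_summable_norm (f := fun n : ℤ => Complex.exp (a*n^2 + b*n))
      (g := fun n : ℤ => Complex.exp (a*n^2 + c*n)) hb hc
  rw [Sf, Sf, tsum_mul_tsum_of_summable_norm (f := fun n : ℤ => Complex.exp (a*n^2 + b*n))
      (g := fun n : ℤ => Complex.exp (a*n^2 + c*n)) hb hc,
    ← Summable.tsum_add_tsum_compl (s := evenPairs) (hH.subtype _) (hH.subtype _)]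
  congr 1
  · rw [← eEven.tsum_eq, Sf, Sf, tsum_mul_tsum_of_summable_norm
      (f := fun n : ℤ => Complex.exp ((2*a)*n^2 + (b+c)*n))
      (g := fun n : ℤ => Complex.exp ((2*a)*n^2 + (b-c)*n))
      (summable_Sf_norm h2a (b+c)) (summable_Sf_norm h2a (b-c))]
    refine tsum_congr fun p => ?_
    show Complex.exp (a * ((p.1+p.2 : ℤ):ℂ)^2 + b * ((p.1+p.2 : ℤ):ℂ)) *
        Complex.exp (a * ((p.1-p.2 : ℤ):ℂ)^2 + c * ((p.1-p.2 : ℤ):ℂ)) = _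
    rw [← Complex.exp_add, ← Complex.exp_add]
    congr 1
    push_cast
    ring
  · rw [← eOdd.tsum_eq, Sf, Sf, tsum_mul_tsum_of_summable_norm
      (f := fun n : ℤ => Complex.exp ((2*a)*n^2 + (2*a+b+c)*n))
      (g := fun n : ℤ => Complex.exp ((2*a)*n^2 + (2*a+b-c)*n))
      (summable_Sf_norm h2a (2*a+b+c)) (summable_Sf_norm h2a (2*a+b-c)), ← tsum_mul_left]
    refine tsum_congr fun p => ?_
    show Complex.exp (a * ((p.1+p.2+1 : ℤ):ℂ)^2 + b * ((p.1+p.2+1 : ℤ):ℂ)) *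
        Complex.exp (a * ((p.1-p.2 : ℤ):ℂ)^2 + c * ((p.1-p.2 : ℤ):ℂ)) = _
    rw [← Complex.exp_add, ← Complex.exp_add, ← Complex.exp_add]
    congr 1
    push_cast
    ring

lemma exp_period (P Q : ℂ) (k : ℤ) (h : P = Q + k * (2 * π * I)) :
    Complex.exp P = Complex.exp Q := by
  rw [h, Complex.exp_add, Complex.exp_int_mul_two_pi_mul_I, mul_one]

lemma exp_period_odd (P Q : ℂ) (k : ℤ) (h : P = Q + (2 * k + 1) * (π * I)) :
    Complex.exp P = -Complex.exp Q := by
  rw [h, show ((2*(k:ℂ)+1)) * (π * I) = k * (2 * π * I) + π * I by push_cast; ring,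
    ← add_assoc, Complex.exp_add, Complex.exp_add, Complex.exp_int_mul_two_pi_mul_I,
    Complex.exp_pi_mul_I, mul_one]
  ring

lemma neg_pow_eq_exp (n : ℕ) : ((-1 : ℂ)) ^ n = Complex.exp (n * (π * I)) := by
  rw [← Complex.exp_pi_mul_I, ← Complex.exp_nat_mul]

lemma log_re_neg {q : ℂ} (hq0 : q ≠ 0) (hq1 : ‖q‖ < 1) : (Complex.log q).re < 0 := by
  rw [Complex.log_re]
  exact Real.log_neg (norm_pos_iff.mpr hq0) hq1

lemma rep4 {q : ℂ} (hq0 : q ≠ 0) (hq1 : ‖q‖ < 1) (z : ℂ) :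
    thetaJ₄ q z = Sf (Complex.log q) (2 * I * z + π * I) := by
  set w := Complex.log q with hwdef
  have hw : w.re < 0 := log_re_neg hq0 hq1
  set b : ℂ := 2 * I * z + π * I with hbdef
  have hsum := summable_Sf hw b
  set f : ℤ → ℂ := fun n => Complex.exp (w * n^2 + b * n) with hfdef
  have h1 : Summable (fun n : ℕ => f n) := hsum.comp_injective (fun x y h => by exact_mod_cast h)
  have h2 : Summable (fun n : ℕ => f (-(n+1))) :=
    hsum.comp_injective (fun x y h => by omega)
  have h1' : Summable (fun k : ℕ => f ↑(k+1)) := h1.comp_injective (add_left_injective 1)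
  rw [Sf, ← hfdef, tsum_of_nat_of_neg_add_one h1 h2, Summable.tsum_eq_zero_add h1, add_assoc,
    ← Summable.tsum_add h1' h2, thetaJ₄]
  congr 1
  · simp [hfdef]
  · rw [← tsum_mul_left]
    refine tsum_congr fun n => ?_
    have e1 : f (↑(n+1)) = Complex.exp (w * ((n:ℂ)+1)^2 + b * ((n:ℂ)+1)) := by
      simp only [hfdef]; congr 1; push_cast; ring
    have e2 : f (-(↑n+1)) = Complex.exp (w * ((n:ℂ)+1)^2 + b * (-((n:ℂ)+1))) := by
      simp only [hfdef]; congr 1; push_cast; ring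
    rw [e1, e2, Complex.cpow_def_of_ne_zero hq0, neg_pow_eq_exp, Complex.cos, hbdef]
    have key1 : Complex.exp ((↑(n+1):ℂ) * (π*I)) * Complex.exp (w * ((n:ℂ)+1)^2)
        * Complex.exp ((2*((n:ℂ)+1)*z) * I)
        = Complex.exp (w * ((n:ℂ)+1)^2 + (2*I*z + π*I) * ((n:ℂ)+1)) := by
      rw [← Complex.exp_add, ← Complex.exp_add]; congr 1; push_cast; ring
    have key2 : Complex.exp ((↑(n+1):ℂ) * (π*I)) * Complex.exp (w * ((n:ℂ)+1)^2)
        * Complex.exp ((-(2*((n:ℂ)+1)*z)) * I)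
        = Complex.exp (w * ((n:ℂ)+1)^2 + (2*I*z + π*I) * (-((n:ℂ)+1))) := by
      rw [← Complex.exp_add, ← Complex.exp_add]
      exact exp_period _ _ (n+1) (by push_cast; ring)
    linear_combination key1 + key2

lemma rep1 {q : ℂ} (hq0 : q ≠ 0) (hq1 : ‖q‖ < 1) (z : ℂ) :
    thetaJ₁ q z = -I * Complex.exp (Complex.log q / 4 + I * z)
      * Sf (Complex.log q) (Complex.log q + 2 * I * z + π * I) := by
  set w := Complex.log q with hwdef
  have hw : w.re < 0 := log_re_neg hq0 hq1
  set b : ℂ := w + 2 * I * z + π * I with hbdef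
  have hsum0 := summable_Sf hw b
  set f : ℤ → ℂ := fun n => Complex.exp (w * n^2 + b * n) with hfdef
  have hsum : Summable (fun n : ℤ => -I * Complex.exp (w/4 + I*z) * f n) := hsum0.mul_left _
  have h1 : Summable (fun n : ℕ => -I * Complex.exp (w/4 + I*z) * f n) :=
    hsum.comp_injective (fun x y h => by exact_mod_cast h)
  have h2 : Summable (fun n : ℕ => -I * Complex.exp (w/4 + I*z) * f (-(n+1))) :=
    hsum.comp_injective (fun x y h => by omega)
  rw [Sf, ← hfdef, ← tsum_mul_left,
    tsum_of_nat_of_neg_add_one (f := fun n : ℤ => -I * Complex.exp (w/4 + I*z) * f n) h1 h2,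
    ← Summable.tsum_add h1 h2, thetaJ₁, ← tsum_mul_left]
  refine tsum_congr fun n => ?_
  have e1 : f (↑n) = Complex.exp (w * (n:ℂ)^2 + (w + 2*I*z + π*I) * (n:ℂ)) := by
    simp only [hfdef, hbdef]; norm_cast
  have e2 : f (-(↑n+1)) = Complex.exp (w * ((n:ℂ)+1)^2 + (w + 2*I*z + π*I) * (-((n:ℂ)+1))) := by
    simp only [hfdef, hbdef]; congr 1; push_cast; ring
  rw [e1, e2, Complex.cpow_def_of_ne_zero hq0, neg_pow_eq_exp, Complex.sin]
  have key1 : Complex.exp (w/4 + I*z) * Complex.exp (w * (n:ℂ)^2 + (w + 2*I*z + π*I) * (n:ℂ))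
      = Complex.exp ((n:ℂ) * (π*I)) * Complex.exp (w * ((n:ℂ)+1/2)^2)
        * Complex.exp (((2*(n:ℂ)+1)*z) * I) := by
    rw [← Complex.exp_add, ← Complex.exp_add, ← Complex.exp_add]; congr 1; ring
  have key2 : Complex.exp (w/4 + I*z)
      * Complex.exp (w * ((n:ℂ)+1)^2 + (w + 2*I*z + π*I) * (-((n:ℂ)+1)))
      = -(Complex.exp ((n:ℂ) * (π*I)) * Complex.exp (w * ((n:ℂ)+1/2)^2)
        * Complex.exp ((-((2*(n:ℂ)+1)*z)) * I)) := by
    rw [← Complex.exp_add, ← Complex.exp_add, ← Complex.exp_add]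
    exact exp_period_odd _ _ (-(n:ℤ)-1) (by push_cast; ring)
  linear_combination I * key1 + I * key2

noncomputable def Af (q t : ℂ) : ℂ := Sf (2 * Complex.log q) (2 * I * t)
noncomputable def Bf (q t : ℂ) : ℂ :=
  Complex.exp (Complex.log q / 2 + I * t) * Sf (2 * Complex.log q) (2 * Complex.log q + 2 * I * t)

lemma Af_neg (q t : ℂ) : Af q (-t) = Af q t := by
  rw [Af, Af, show 2*I*(-t) = -(2*I*t) by ring, Sf_neg]

lemma Bf_neg (q t : ℂ) : Bf q (-t) = Bf q t := by
  set w := Complex.log q with hwdef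
  rw [Bf, Bf, show 2*w + 2*I*(-t) = 2*(2*w) + (-(2*w) - 2*I*t) by ring, Sf_shift,
    show (-(2*w + (-(2*w) - 2*I*t))) = 2*I*t by ring,
    show -(2*w) - 2*I*t = -(2*w + 2*I*t) by ring, Sf_neg]
  have g : Complex.exp (w/2 + I*(-t)) * Complex.exp (2*I*t) = Complex.exp (w/2 + I*t) := by
    rw [← Complex.exp_add]; congr 1; ring
  linear_combination (Sf (2*w) (2*w + 2*I*t)) * g

lemma theta4_mul {q : ℂ} (hq0 : q ≠ 0) (hq1 : ‖q‖ < 1) (x y : ℂ) :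
    thetaJ₄ q x * thetaJ₄ q y = Af q (x+y) * Af q (x-y) - Bf q (x+y) * Bf q (x-y) := by
  set w := Complex.log q with hwdef
  have hw : w.re < 0 := log_re_neg hq0 hq1
  rw [rep4 hq0 hq1 x, rep4 hq0 hq1 y]
  have hP := prod_Sf hw (2*I*x + π*I) (2*I*y + π*I)
  rw [show (2*I*x+π*I) + (2*I*y+π*I) = 2*I*(x+y) + 2*π*I by ring, Sf_period,
      show (2*I*x+π*I) - (2*I*y+π*I) = 2*I*(x-y) by ring,
      show 2*w + (2*I*x+π*I) + (2*I*y+π*I) = (2*w + 2*I*(x+y)) + 2*π*I by ring, Sf_period,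
      show 2*w + (2*I*x+π*I) - (2*I*y+π*I) = 2*w + 2*I*(x-y) by ring] at hP
  have hc : Complex.exp (w + (2*I*x + π*I))
      = -(Complex.exp (w/2 + I*(x+y)) * Complex.exp (w/2 + I*(x-y))) := by
    rw [← Complex.exp_add]; exact exp_period_odd _ _ 0 (by push_cast; ring)
  rw [hc] at hP
  rw [Af, Af, Bf, Bf]
  linear_combination hP

lemma theta1_mul {q : ℂ} (hq0 : q ≠ 0) (hq1 : ‖q‖ < 1) (x y : ℂ) :
    thetaJ₁ q x * thetaJ₁ q y = Af q (x+y) * Bf q (x-y) - Bf q (x+y) * Af q (x-y) := by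
  set w := Complex.log q with hwdef
  have hw : w.re < 0 := log_re_neg hq0 hq1
  rw [rep1 hq0 hq1 x, rep1 hq0 hq1 y]
  have hP := prod_Sf hw (w + 2*I*x + π*I) (w + 2*I*y + π*I)
  rw [show (w+2*I*x+π*I) + (w+2*I*y+π*I) = (2*w + 2*I*(x+y)) + 2*π*I by ring, Sf_period,
      show (w+2*I*x+π*I) - (w+2*I*y+π*I) = 2*I*(x-y) by ring,
      show 2*w + (w+2*I*x+π*I) + (w+2*I*y+π*I) = (2*(2*w) + 2*I*(x+y)) + 2*π*I by ring,
      Sf_period, Sf_shift,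
      show 2*w + (w+2*I*x+π*I) - (w+2*I*y+π*I) = 2*w + 2*I*(x-y) by ring] at hP
  have hgoal : (-I * Complex.exp (w/4 + I*x) * Sf w (w + 2*I*x + π*I))
      * (-I * Complex.exp (w/4 + I*y) * Sf w (w + 2*I*y + π*I))
      = -(Complex.exp (w/4 + I*x) * Complex.exp (w/4 + I*y))
        * (Sf w (w + 2*I*x + π*I) * Sf w (w + 2*I*y + π*I)) := by
    linear_combination (Complex.exp (w/4 + I*x) * Sf w (w + 2*I*x + π*I)
      * Complex.exp (w/4 + I*y) * Sf w (w + 2*I*y + π*I)) * Complex.I_mul_I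
  rw [hgoal, Af, Af, Bf, Bf]
  have g1 : Complex.exp (w/4 + I*x) * Complex.exp (w/4 + I*y)
      = Complex.exp (w/2 + I*(x+y)) := by
    rw [← Complex.exp_add]; congr 1; ring
  have g2 : Complex.exp (w/4 + I*x) * Complex.exp (w/4 + I*y)
      * (Complex.exp (w + (w + 2*I*x + π*I)) * Complex.exp (-(2*w + 2*I*(x+y))))
      = -Complex.exp (w/2 + I*(x-y)) := by
    rw [← Complex.exp_add, ← Complex.exp_add, ← Complex.exp_add]
    exact exp_period_odd _ _ 0 (by push_cast; ring)
  linear_combination (-(Complex.exp (w/4 + I*x) * Complex.exp (w/4 + I*y))) * hP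
    - (Sf (2*w) (2*w + 2*I*(x+y)) * Sf (2*w) (2*I*(x-y))) * g1
    - (Sf (2*w) (2*I*(x+y)) * Sf (2*w) (2*w + 2*I*(x-y))) * g2

/-- Baxter's second theta addition formula (15.4.26):
`ϑ₁(v)ϑ₁(a−v)ϑ₄(u)ϑ₄(a−u) − ϑ₄(v)ϑ₄(a−v)ϑ₁(u)ϑ₁(a−u) = ϑ₄(0)ϑ₄(a)ϑ₁(v−u)ϑ₁(a−u−v)`. -/
theorem theta_addition_formula_second (q : ℂ) (hq : ‖q‖ < 1) (u v a : ℂ) :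
    thetaJ₁ q v * thetaJ₁ q (a - v) * thetaJ₄ q u * thetaJ₄ q (a - u)
      - thetaJ₄ q v * thetaJ₄ q (a - v) * thetaJ₁ q u * thetaJ₁ q (a - u)
    = thetaJ₄ q 0 * thetaJ₄ q a * thetaJ₁ q (v - u) * thetaJ₁ q (a - u - v) := by
  by_cases hq0 : q = 0
  · have h1 : ∀ z : ℂ, thetaJ₁ q z = 0 := by
      intro z
      rw [thetaJ₁]
      rw [tsum_congr (fun n : ℕ => show (-1 : ℂ) ^ n * q ^ (((n : ℂ) + 1/2) ^ 2)
          * Complex.sin ((2 * (n : ℂ) + 1) * z) = 0 from by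
        have hne : ((n:ℂ) + 1/2) ≠ 0 := by
          intro h
          have h2 := congrArg Complex.re h
          simp [Complex.add_re] at h2
          have : (0:ℝ) ≤ (n:ℝ) := Nat.cast_nonneg n
          norm_num at h2
          linarith
        rw [hq0, Complex.zero_cpow (pow_ne_zero 2 hne)]
        ring), tsum_zero]
      ring
    have h4 : ∀ z : ℂ, thetaJ₄ q z = 1 := by
      intro z
      rw [thetaJ₄]
      rw [tsum_congr (fun n : ℕ => show (-1 : ℂ) ^ (n+1) * q ^ (((n : ℂ) + 1) ^ 2)
          * Complex.cos (2 * ((n : ℂ) + 1) * z) = 0 from by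
        have hne : ((n:ℂ) + 1) ≠ 0 := by
          intro h
          have h2 := congrArg Complex.re h
          simp [Complex.add_re] at h2
          have : (0:ℝ) ≤ (n:ℝ) := Nat.cast_nonneg n
          linarith
        rw [hq0, Complex.zero_cpow (pow_ne_zero 2 hne)]
        ring), tsum_zero]
      ring
    rw [h1, h1, h1, h1, h1, h1, h4, h4, h4, h4, h4, h4]
    ring
  · have h1v := theta1_mul hq0 hq v (a-v)
    rw [show v + (a-v) = a by ring, show v - (a-v) = 2*v-a by ring] at h1v
    have h1u := theta1_mul hq0 hq u (a-u)
    rw [show u + (a-u) = a by ring, show u - (a-u) = 2*u-a by ring] at h1u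
    have h4v := theta4_mul hq0 hq v (a-v)
    rw [show v + (a-v) = a by ring, show v - (a-v) = 2*v-a by ring] at h4v
    have h4u := theta4_mul hq0 hq u (a-u)
    rw [show u + (a-u) = a by ring, show u - (a-u) = 2*u-a by ring] at h4u
    have h40 := theta4_mul hq0 hq 0 a
    rw [show (0:ℂ) + a = a by ring, show (0:ℂ) - a = -a by ring, Af_neg, Bf_neg] at h40
    have h1r := theta1_mul hq0 hq (v-u) (a-u-v)
    rw [show (v-u) + (a-u-v) = -(2*u-a) by ring, show (v-u) - (a-u-v) = 2*v-a by ring,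
      Af_neg, Bf_neg] at h1r
    have HA : thetaJ₁ q v * thetaJ₁ q (a - v) * thetaJ₄ q u * thetaJ₄ q (a - u)
        = (thetaJ₁ q v * thetaJ₁ q (a - v)) * (thetaJ₄ q u * thetaJ₄ q (a - u)) := by ring
    have HB : thetaJ₄ q v * thetaJ₄ q (a - v) * thetaJ₁ q u * thetaJ₁ q (a - u)
        = (thetaJ₄ q v * thetaJ₄ q (a - v)) * (thetaJ₁ q u * thetaJ₁ q (a - u)) := by ring
    have HC : thetaJ₄ q 0 * thetaJ₄ q a * thetaJ₁ q (v - u) * thetaJ₁ q (a - u - v)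
        = (thetaJ₄ q 0 * thetaJ₄ q a) * (thetaJ₁ q (v - u) * thetaJ₁ q (a - u - v)) := by ring
    rw [HA, HB, HC, h1v, h1u, h4v, h4u, h40, h1r]
    ring
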